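/- Let δ₀ ∈ (0,1) be sufficiently small, A⁰ > 0, y⁰ ∈ 𝒴₁ with ‖y⁰‖₁ ≤ δ₀, and p⁰ = (p_n⁰)_{n∈ℤ} a sequence with |p_n⁰| ≤ δ₀; define m_n⁰ := m̄_n(A⁰, p⁰)(1 + 2^{n} y_n⁰) for n ∈ ℤ. For N ∈ ℕ let p^N(0) denote the sequence with p^N_n(0) = p_n⁰ for n ≤ N and p^N_n(0) = 0 for n > N. Then for all sufficiently large N there exist A^N(0) > 0 and a sequence y^N(0) = (y^N_n(0))_{n≤N} with y^N_N(0) = 0 such that m_n⁰ = m̄_n(A^N(0), p^N(0))(1 + 2^{n} y^N_n(0)) for all n ≤ N, and moreover |A^N(0) − A⁰| ≤ c₀ 2^{−N} δ₀ and ‖y^N(0) − y⁰‖₁ ≤ c₀ δ₀ (the norm taken over n ≤ N), for a constant c₀ > 0 independent of N. -/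

import Mathlib

open Real MeasureTheory Filter Topology Asymptotics

noncomputable section

/-- The assumptions on the coagulation rate function `k` and the fragmentation
rate function `γ`, together with all the fixed structural constants. -/
structure Kernels where
  (α αb k₀ k₁ k₂ β βt βb γ₀ γ₁ γ₂ : ℝ)
  (k γ : ℝ → ℝ)
  hα : 0 < α ∧ α < 1
  hαb : 1 < αb
  hk₀ : 0 < k₀
  hk₁ : 0 < k₁
  hk₂ : 0 < k₂
  hβ : 1 < β ∧ β < 2
  hβt : βt < β
  hβb : 1 < βb
  hγ₀ : 0 < γ₀
  hγ₁ : 0 < γ₁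
  hγ₂ : 0 < γ₂
  hkC2 : ContDiffOn ℝ 2 k (Set.Ioi 0)
  hkpos : ∀ ξ : ℝ, 0 < ξ → 0 < k ξ
  hkInfty : Tendsto (fun ξ : ℝ => k ξ / ξ ^ (α + 1)) atTop (𝓝 1)
  hkZero : (fun ξ : ℝ => k ξ - k₀) =O[𝓝[>] (0:ℝ)] fun ξ : ℝ => ξ ^ αb
  hk'ge : ∀ ξ : ℝ, 1 ≤ ξ → |deriv k ξ| ≤ k₁ * ξ ^ α
  hk'le : ∀ ξ : ℝ, 0 < ξ → ξ ≤ 1 → |deriv k ξ| ≤ k₁ * ξ ^ (αb - 1)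
  hk''ge : ∀ ξ : ℝ, 1 ≤ ξ → |deriv (deriv k) ξ| ≤ k₂ * ξ ^ (α - 1)
  hk''le : ∀ ξ : ℝ, 0 < ξ → ξ ≤ 1 → |deriv (deriv k) ξ| ≤ k₂ * ξ ^ (αb - 2)
  hγC2 : ContDiffOn ℝ 2 γ (Set.Ioi 0)
  hγpos : ∀ ξ : ℝ, 0 < ξ → 0 < γ ξ
  hγInfty : (fun ξ : ℝ => γ ξ - ξ ^ β) =O[atTop] fun ξ : ℝ => ξ ^ βt
  hγZero : (fun ξ : ℝ => γ ξ - γ₀) =O[𝓝[>] (0:ℝ)] fun ξ : ℝ => ξ ^ βb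
  hγ'ge : ∀ ξ : ℝ, 1 ≤ ξ → |deriv γ ξ| ≤ γ₁ * ξ ^ (β - 1)
  hγ'le : ∀ ξ : ℝ, 0 < ξ → ξ ≤ 1 → |deriv γ ξ| ≤ γ₁ * ξ ^ (βb - 1)
  hγ''ge : ∀ ξ : ℝ, 1 ≤ ξ → |deriv (deriv γ) ξ| ≤ γ₂ * ξ ^ (β - 2)
  hγ''le : ∀ ξ : ℝ, 0 < ξ → ξ ≤ 1 → |deriv (deriv γ) ξ| ≤ γ₂ * ξ ^ (βb - 2)

/-- `ζ_n(p) = ln 2 · 2^{-(n+p_n)} k(2^{n+p_n}) / γ(2^{n+1+p_{n+1}})`. -/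
def Kernels.zeta (KD : Kernels) (p : ℤ → ℝ) (n : ℤ) : ℝ :=
  Real.log 2 * (2:ℝ) ^ (-((n:ℝ) + p n)) * KD.k ((2:ℝ) ^ ((n:ℝ) + p n)) /
    KD.γ ((2:ℝ) ^ ((n:ℝ) + 1 + p (n + 1)))

/-- `ζ_{n,ρ}` for a constant shift `ρ`. -/
def Kernels.zetaRho (KD : Kernels) (ρ : ℝ) (n : ℤ) : ℝ := KD.zeta (fun _ => ρ) n

/-- `θ_n(p) = 2 ζ_{n+1}(p)/ζ_n(p)`. -/
def Kernels.thetaSeq (KD : Kernels) (p : ℤ → ℝ) (n : ℤ) : ℝ :=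
  2 * KD.zeta p (n + 1) / KD.zeta p n

/-- `μ̄_n(A,p) = e^{-A 2^n} exp(-2^n Σ_{j=n+1}^∞ 2^{-j} ln θ_{j-1}(p))`. -/
def Kernels.mubar (KD : Kernels) (A : ℝ) (p : ℤ → ℝ) (n : ℤ) : ℝ :=
  Real.exp (-A * (2:ℝ) ^ (n:ℝ)) *
    Real.exp (-((2:ℝ) ^ (n:ℝ)) *
      ∑' j : ℕ, (2:ℝ) ^ (-((n:ℝ) + 1 + (j:ℝ))) * Real.log (KD.thetaSeq p (n + (j:ℤ))))

/-- `m̄_n(A,p) = 2 μ̄_n(A,p) / ζ_n(p)`. -/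
def Kernels.mbar (KD : Kernels) (A : ℝ) (p : ℤ → ℝ) (n : ℤ) : ℝ :=
  2 * KD.mubar A p n / KD.zeta p n

/-- The weighted norm `‖y‖_θ = sup_{n≤0} 2^n |y_n| + sup_{n>0} 2^{θ n} |y_n|`,
valued in `ℝ≥0∞` so that membership in `𝒴_θ` is expressed by `Ynorm θ y < ⊤`. -/
def Ynorm (θ : ℝ) (y : ℤ → ℝ) : ENNReal :=
  (⨆ n : {m : ℤ // m ≤ 0}, ENNReal.ofReal ((2:ℝ) ^ ((n.1 : ℝ)) * |y n.1|)) +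
    ⨆ n : {m : ℤ // 0 < m}, ENNReal.ofReal ((2:ℝ) ^ (θ * (n.1 : ℝ)) * |y n.1|)

/-- Discrete derivative `D⁺_n(y) = y_{n+1} - y_n`. -/
def Dplus (y : ℤ → ℝ) (n : ℤ) : ℝ := y (n + 1) - y n

/-- Admissible test functions: continuous, finite limit at `-∞`, and `φ(x) ≤ C 2^x`
for large `x`. -/
def TestFun (φ : ℝ → ℝ) : Prop :=
  Continuous φ ∧ (∃ L : ℝ, Tendsto φ atBot (𝓝 L)) ∧
    ∃ C x₀ : ℝ, ∀ x : ℝ, x₀ ≤ x → φ x ≤ C * (2:ℝ) ^ x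

/-- Right-hand side of the weak formulation of the coagulation–fragmentation
equation in logarithmic variables, for a kernel `Kl` (in logarithmic variables)
and a fragmentation rate `gam`. -/
def weakRHS (Kl : ℝ → ℝ → ℝ) (gam : ℝ → ℝ) (μ : Measure ℝ) (φ : ℝ → ℝ) : ℝ :=
  Real.log 2 / 2 *
      ∫ y, ∫ z, Kl y z * (φ (Real.logb 2 ((2:ℝ) ^ y + (2:ℝ) ^ z)) - φ y - φ z) ∂μ ∂μ -
    1 / 4 * ∫ y, gam ((2:ℝ) ^ y) * (φ y - 2 * φ (y - 1)) ∂μ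

/-- Weak solution of the coagulation–fragmentation equation in logarithmic
variables on the time set `S`, with initial datum `g₀`. -/
def IsWeakSolutionOn (β : ℝ) (Kl : ℝ → ℝ → ℝ) (gam : ℝ → ℝ) (S : Set ℝ)
    (g₀ : Measure ℝ) (g : ℝ → Measure ℝ) : Prop :=
  g 0 = g₀ ∧
  (∀ t ∈ S, ∫⁻ x, ENNReal.ofReal (1 + (2:ℝ) ^ ((β + 1) * x)) ∂(g t) < ⊤) ∧
  (∀ φ : ℝ → ℝ, TestFun φ → ContinuousOn (fun t => ∫ x, φ x ∂(g t)) S) ∧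
  ∀ φ : ℝ → ℝ, TestFun φ → ∀ t ∈ S,
    HasDerivWithinAt (fun s => ∫ x, φ x ∂(g s)) (weakRHS Kl gam (g t) φ) S t

/-- The structural assumptions on the cut-off `Q` and the full coagulation kernel. -/
structure CoagData extends Kernels where
  Q : ℝ → ℝ
  hQC2 : ContDiff ℝ 2 Q
  hQ0 : ∀ x, 0 ≤ Q x
  hQ1 : Q 0 = 1
  hQeven : ∀ x, Q (-x) = Q x
  hQsupp : Function.support Q ⊆ Set.Ioo (-(1/3) : ℝ) (1/3)

/-- The coagulation kernel `K(ξ,η) = (ξ+η)⁻¹ k((ξ+η)/2) Q(2η/(ξ+η) - 1)`. -/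
def CoagData.K (S : CoagData) (ξ η : ℝ) : ℝ :=
  (ξ + η)⁻¹ * S.k ((ξ + η) / 2) * S.Q (2 * η / (ξ + η) - 1)

/-- The coagulation kernel in logarithmic variables, `K(2^y, 2^z)`. -/
def CoagData.Klog (S : CoagData) (y z : ℝ) : ℝ := S.K ((2:ℝ) ^ y) ((2:ℝ) ^ z)

/-- Truncated coagulation kernel in logarithmic variables:
`K_N(2^y,2^z) = K(2^y,2^z) 1_{y < N - 1/2}`. -/
def CoagData.KlogN (S : CoagData) (N : ℕ) (y z : ℝ) : ℝ :=
  if y < (N:ℝ) - 1/2 then S.Klog y z else 0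

/-- Truncated fragmentation rate: `γ_N(ξ) = γ(ξ) 1_{ξ < 2^{N+1/2}}`. -/
def Kernels.gammaTrunc (KD : Kernels) (N : ℕ) (ξ : ℝ) : ℝ :=
  if ξ < (2:ℝ) ^ ((N:ℝ) + 1/2) then KD.γ ξ else 0

/-- `m_n(t)` : the mass of the measure in the interval `I_n = (n-δ₀, n+δ₀)`. -/
def mIn (δ₀ : ℝ) (μ : Measure ℝ) (n : ℤ) : ℝ :=
  (μ (Set.Ioo ((n:ℝ) - δ₀) ((n:ℝ) + δ₀))).toReal

/-- `p_n(t)` : normalized first moment of the measure around the peak `n`. -/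
def pIn (δ₀ : ℝ) (μ : Measure ℝ) (n : ℤ) : ℝ :=
  (mIn δ₀ μ n)⁻¹ * ∫ x in Set.Ioo ((n:ℝ) - δ₀) ((n:ℝ) + δ₀), (x - (n:ℝ)) ∂μ

/-- `q_n(t)` : normalized second moment of the measure around the peak `n`. -/
def qIn (δ₀ : ℝ) (μ : Measure ℝ) (n : ℤ) : ℝ :=
  (mIn δ₀ μ n)⁻¹ *
    ∫ x in Set.Ioo ((n:ℝ) - δ₀) ((n:ℝ) + δ₀), (x - (n:ℝ) - pIn δ₀ μ n) ^ 2 ∂μ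

/-- `m_n⁰ = μ([n-1/2, n+1/2))`. -/
def mhalf (μ : Measure ℝ) (n : ℤ) : ℝ :=
  (μ (Set.Ico ((n:ℝ) - 1/2) ((n:ℝ) + 1/2))).toReal

/-- `p_n⁰ = (m_n⁰)⁻¹ ∫_{[n-1/2,n+1/2)} (x-n) dμ`. -/
def phalf (μ : Measure ℝ) (n : ℤ) : ℝ :=
  (mhalf μ n)⁻¹ * ∫ x in Set.Ico ((n:ℝ) - 1/2) ((n:ℝ) + 1/2), (x - (n:ℝ)) ∂μ

/-- The measure is supported in `∪_{n∈ℤ} (n-δ₀, n+δ₀)`. -/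
def suppInPeaks (δ₀ : ℝ) (μ : Measure ℝ) : Prop :=
  μ ((⋃ n : ℤ, Set.Ioo ((n:ℝ) - δ₀) ((n:ℝ) + δ₀))ᶜ) = 0

/-- Characterization of the stationary peak coefficients `a_n(A,ρ)`:
positive, bounded, solving the recurrence `a_{n+1} = ζ_{n,ρ} a_n²`, with
`a_n = O(2^n)` as `n → -∞` and `a_n = O(2^{(β-α)n} e^{-A 2^n})` as `n → ∞`. -/
def IsStationaryFamily (KD : Kernels) (A ρ : ℝ) (a : ℤ → ℝ) : Prop :=
  (∀ n, 0 < a n) ∧ (∃ B : ℝ, ∀ n, a n ≤ B) ∧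
  (∀ n : ℤ, a (n + 1) = KD.zetaRho ρ n * a n ^ 2) ∧
  ((fun n : ℤ => a n) =O[atBot] fun n : ℤ => (2:ℝ) ^ (n:ℝ)) ∧
  ((fun n : ℤ => a n) =O[atTop]
    fun n : ℤ => (2:ℝ) ^ ((KD.β - KD.α) * (n:ℝ)) * Real.exp (-A * (2:ℝ) ^ (n:ℝ)))

/-- Hypothesis (⋆) on a time-dependent shift sequence `p(t)` with derivative `p'`. -/
def StarHyp (KD : Kernels) (θb₁ η₀ ν : ℝ) (p p' : ℝ → ℤ → ℝ) : Prop :=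
  (∀ t : ℝ, 0 < t → ∀ n : ℤ, |p t n| ≤ η₀) ∧
  (∀ t : ℝ, 0 < t → ∀ n : ℤ, HasDerivAt (fun s => p s n) (p' t n) t) ∧
  (∀ t : ℝ, 0 < t →
    Ynorm θb₁ (Dplus (p t)) ≤
      ENNReal.ofReal (η₀ * t ^ (-(θb₁ / KD.β)) * Real.exp (-(ν * t) / 2))) ∧
  (∀ t : ℝ, 0 < t →
    Ynorm (θb₁ - KD.β) (p' t) ≤
      ENNReal.ofReal (η₀ * (1 + t ^ (-(θb₁ / KD.β))) * Real.exp (-(ν * t) / 2)))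

/-- Coefficient `σ_n(t)` of the time-dependent linearized problem. -/
def Kernels.sigmaLin (KD : Kernels) (AM : ℝ) (p : ℝ → ℤ → ℝ) (n : ℤ) (t : ℝ) : ℝ :=
  8 * KD.mubar AM (p t) n * KD.γ ((2:ℝ) ^ ((n:ℝ) + 1 + p t (n + 1))) /
    KD.γ ((2:ℝ) ^ ((n:ℝ) + p t n))

/-- Solution of the time-dependent linearized problem with datum `y0` at time `t₀`. -/
def IsLinSol (KD : Kernels) (AM : ℝ) (p : ℝ → ℤ → ℝ) (θ t₀ : ℝ)
    (y0 : ℤ → ℝ) (y : ℝ → ℤ → ℝ) : Prop :=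
  y t₀ = y0 ∧ (∀ t ∈ Set.Ici t₀, Ynorm θ (y t) < ⊤) ∧
    ∀ t ∈ Set.Ici t₀, ∀ n : ℤ,
      HasDerivWithinAt (fun s => y s n)
        (KD.γ ((2:ℝ) ^ ((n:ℝ) + p t n)) / 4 *
          (y t (n - 1) - y t n - KD.sigmaLin AM p n t * (y t n - y t (n + 1))))
        (Set.Ici t₀) t

/-- Coefficient `σ^N_n(t)` of the truncated time-dependent linearized problem. -/
def Kernels.sigmaLinT (KD : Kernels) (AM : ℝ) (N : ℤ) (p : ℝ → ℤ → ℝ) (n : ℤ) (t : ℝ) : ℝ :=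
  if n < N then KD.sigmaLin AM p n t else 0

/-- Solution of the truncated time-dependent linearized problem. -/
def IsLinSolTrunc (KD : Kernels) (AM : ℝ) (N : ℤ) (p : ℝ → ℤ → ℝ) (θ t₀ : ℝ)
    (y0 : ℤ → ℝ) (y : ℝ → ℤ → ℝ) : Prop :=
  y t₀ = y0 ∧ (∀ t ∈ Set.Ici t₀, Ynorm θ (y t) < ⊤) ∧
    (∀ t ∈ Set.Ici t₀, ∀ n : ℤ, N < n → y t n = 0) ∧
    ∀ t ∈ Set.Ici t₀, ∀ n : ℤ, n ≤ N →
      HasDerivWithinAt (fun s => y s n)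
        (KD.γ ((2:ℝ) ^ ((n:ℝ) + p t n)) / 4 *
          (y t (n - 1) - y t n - KD.sigmaLinT AM N p n t * (y t n - y t (n + 1))))
        (Set.Ici t₀) t

/-- `‖g₀‖ = sup_{n<0} 2^{-n} g₀([n,n+1)) + g₀([0,∞))`, valued in `ℝ≥0∞`. -/
def gnorm (μ : Measure ℝ) : ENNReal :=
  (⨆ n : {m : ℤ // m < 0},
      ENNReal.ofReal ((2:ℝ) ^ (-(n.1 : ℝ))) * μ (Set.Ico ((n.1 : ℝ)) ((n.1 : ℝ) + 1))) +
    μ (Set.Ici (0:ℝ))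

/-! Write `m̄_n(A,p) = 2 exp(-A 2^n - Φ_n(p))` with
`Φ_n(p) = 2^n Σ_{j>n} 2^{-j} ln θ_{j-1}(p) + ln ζ_n(p)`. The truncated shift `p^N` agrees with `p⁰`
up to `N` and differs from it by at most `δ₀` beyond, where `x ↦ ln k(2^x)` and `x ↦ ln γ(2^x)`
are Lipschitz; so `ln ζ_n`, hence `ln θ_n` and `Φ_n`, move by `O(δ₀)` uniformly in `n`. The factor
`e^{Φ_n(p^N) - Φ_n(p⁰)} = 1 + O(δ₀)` is absorbed into the new correction `y^N`, and `A^N` is fixed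
by requiring `y^N_N = 0`; as the amplitude enters through `A 2^N` at `n = N`, this moves it only by
`O(2^{-N} δ₀)`. -/

open Set

lemma abs_log_one_add_le {u : ℝ} (hu : |u| ≤ 1 / 2) : |Real.log (1 + u)| ≤ 2 * |u| := by
  obtain ⟨hlo, hhi⟩ := abs_le.1 hu
  have hpos : 0 < 1 + u := by linarith
  have hinv : (1 + u)⁻¹ ≤ 1 + 2 * |u| := by
    rw [inv_le_iff_one_le_mul₀ hpos]
    cases abs_cases u <;> nlinarith
  have := Real.one_sub_inv_le_log_of_pos hpos
  have := Real.log_le_sub_one_of_pos hpos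
  rw [abs_le]
  constructor <;> linarith [le_abs_self u]

lemma abs_exp_sub_one_mul_le {E v : ℝ} (hE : |E| ≤ 1) (hv : |v| ≤ 1 / 2) :
    |(Real.exp E - 1) * (1 + v)| ≤ 3 * |E| := by
  have h1 : |1 + v| ≤ 3 / 2 := (abs_add_le 1 v).trans (by rw [abs_one]; linarith)
  rw [abs_mul]
  nlinarith [Real.abs_exp_sub_one_le hE, abs_nonneg (Real.exp E - 1), abs_nonneg E]

/-- No summability is assumed: it transfers between `w * u` and `w * v`, and if both fail, both
sums are `0`. -/
lemma abs_tsum_mul_sub_tsum_mul_le {w u v : ℕ → ℝ} {ε : ℝ} (hw : Summable w) (hw0 : ∀ j, 0 ≤ w j)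
    (huv : ∀ j, |u j - v j| ≤ ε) :
    |∑' j, w j * u j - ∑' j, w j * v j| ≤ ε * ∑' j, w j := by
  have hε : 0 ≤ ε := (abs_nonneg _).trans (huv 0)
  have hbound : ∀ j, ‖w j * (u j - v j)‖ ≤ ε * w j := fun j => by
    rw [Real.norm_eq_abs, abs_mul, abs_of_nonneg (hw0 j), mul_comm ε]
    exact mul_le_mul_of_nonneg_left (huv j) (hw0 j)
  have hdiff : Summable fun j => w j * (u j - v j) :=
    Summable.of_norm_bounded (hw.mul_left ε) hbound
  by_cases hu : Summable fun j => w j * u j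
  · have hv : Summable fun j => w j * v j := (hu.sub hdiff).congr fun j => by ring
    rw [← hu.tsum_sub hv, ← tsum_mul_left]
    simp only [← mul_sub]
    exact (norm_tsum_le_tsum_norm hdiff.norm).trans
      (hdiff.norm.tsum_le_tsum hbound (hw.mul_left ε))
  · have hv : ¬ Summable fun j => w j * v j := fun hv =>
      hu ((hv.add hdiff).congr fun j => by ring)
    rw [tsum_eq_zero_of_not_summable hu, tsum_eq_zero_of_not_summable hv, sub_self, abs_zero]
    exact mul_nonneg hε (tsum_nonneg hw0)

lemma two_rpow_neg_add_natCast (x : ℝ) (j : ℕ) :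
    (2:ℝ) ^ (-(x + 1 + j)) = (2:ℝ) ^ (-(x + 1)) * ((1:ℝ) / 2) ^ j := by
  rw [neg_add, Real.rpow_add two_pos, Real.rpow_neg two_pos.le (j:ℝ), Real.rpow_natCast,
    one_div, inv_pow]

lemma abs_two_rpow_mul_tsum_sub_le (x : ℝ) {u v : ℕ → ℝ} {ε : ℝ} (huv : ∀ j, |u j - v j| ≤ ε) :
    |(2:ℝ) ^ x * (∑' j : ℕ, (2:ℝ) ^ (-(x + 1 + j)) * u j -
      ∑' j : ℕ, (2:ℝ) ^ (-(x + 1 + j)) * v j)| ≤ ε := by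
  have hscale : (2:ℝ) ^ x * (2:ℝ) ^ (-(x + 1)) = 1 / 2 := by
    rw [← Real.rpow_add two_pos, show x + -(x + 1) = -1 by ring, Real.rpow_neg_one, one_div]
  simp only [two_rpow_neg_add_natCast, mul_assoc, tsum_mul_left]
  rw [← mul_sub, ← mul_assoc, hscale, abs_mul, abs_of_pos (by norm_num : (0:ℝ) < 1 / 2)]
  have := abs_tsum_mul_sub_tsum_mul_le summable_geometric_two (fun j => by positivity) huv
  rw [tsum_geometric_two] at this
  linarith

lemma two_rpow_mul_abs_le_of_Ynorm_one_le {y : ℤ → ℝ} {δ : ℝ} (hδ : 0 ≤ δ)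
    (hy : Ynorm 1 y ≤ ENNReal.ofReal δ) (n : ℤ) : (2:ℝ) ^ (n:ℝ) * |y n| ≤ δ := by
  refine (ENNReal.ofReal_le_ofReal_iff hδ).1 (le_trans ?_ hy)
  rcases le_or_gt n 0 with hn | hn
  · exact (le_iSup (fun m : {m : ℤ // m ≤ 0} => ENNReal.ofReal ((2:ℝ) ^ (m.1:ℝ) * |y m.1|))
      ⟨n, hn⟩).trans le_self_add
  · rw [← one_mul (n:ℝ)]
    exact (le_iSup (fun m : {m : ℤ // 0 < m} =>
      ENNReal.ofReal ((2:ℝ) ^ ((1:ℝ) * m.1) * |y m.1|)) ⟨n, hn⟩).trans le_add_self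

lemma Ynorm_one_le_of_two_rpow_mul_abs_le {y : ℤ → ℝ} {K : ℝ} (hK : 0 ≤ K)
    (hy : ∀ n : ℤ, (2:ℝ) ^ (n:ℝ) * |y n| ≤ K) : Ynorm 1 y ≤ ENNReal.ofReal (2 * K) := by
  rw [two_mul, ENNReal.ofReal_add hK hK]
  refine add_le_add (iSup_le fun n => ENNReal.ofReal_le_ofReal (hy n.1)) (iSup_le fun n => ?_)
  simpa only [one_mul] using ENNReal.ofReal_le_ofReal (hy n.1)

lemma two_rpow_mul_two_rpow_neg (x : ℝ) : (2:ℝ) ^ x * (2:ℝ) ^ (-x) = 1 := by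
  rw [Real.rpow_neg two_pos.le, mul_inv_cancel₀ (by positivity)]

lemma exists_correction_absorbing_exp_factor (N : ℤ) (E y₀ : ℤ → ℝ) {η : ℝ}
    (hE : ∀ n ≤ N, |E n| ≤ η) (hη : η ≤ 1) (hy₀ : ∀ n : ℤ, |(2:ℝ) ^ (n:ℝ) * y₀ n| ≤ 1 / 2) :
    ∃ y : ℤ → ℝ,
      (∀ n ≤ N, 1 + (2:ℝ) ^ (n:ℝ) * y n = Real.exp (E n) * (1 + (2:ℝ) ^ (n:ℝ) * y₀ n)) ∧
      (∀ n, N < n → y n = y₀ n) ∧ ∀ n : ℤ, (2:ℝ) ^ (n:ℝ) * |y n - y₀ n| ≤ 3 * η := by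
  set y : ℤ → ℝ := fun n => if n ≤ N then
    (2:ℝ) ^ (-(n:ℝ)) * (Real.exp (E n) * (1 + (2:ℝ) ^ (n:ℝ) * y₀ n) - 1) else y₀ n
  have hy : ∀ n ≤ N, 1 + (2:ℝ) ^ (n:ℝ) * y n = Real.exp (E n) * (1 + (2:ℝ) ^ (n:ℝ) * y₀ n) :=
    fun n hn => by
      simp only [y, if_pos hn]
      linear_combination (Real.exp (E n) * (1 + (2:ℝ) ^ (n:ℝ) * y₀ n) - 1) *
        two_rpow_mul_two_rpow_neg (n:ℝ)
  refine ⟨y, hy, fun n hn => if_neg (not_le.2 hn), fun n => ?_⟩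
  rcases le_or_gt n N with hn | hn
  · rw [← abs_of_pos (by positivity : (0:ℝ) < 2 ^ (n:ℝ)), ← abs_mul,
      show (2:ℝ) ^ (n:ℝ) * (y n - y₀ n) = (Real.exp (E n) - 1) * (1 + (2:ℝ) ^ (n:ℝ) * y₀ n) by
        linear_combination hy n hn]
    exact (abs_exp_sub_one_mul_le ((hE n hn).trans hη) (hy₀ n)).trans (by linarith [hE n hn])
  · rw [show y n = y₀ n from if_neg (not_le.2 hn), sub_self, abs_zero, mul_zero]
    linarith [(abs_nonneg _).trans (hE N le_rfl)]

/-- `A` is chosen to make `y_N = 0`, i.e. `(A - A₀) 2^N + D_N = -log (1 + 2^N y₀_N)`; this moves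
`A` only by `O(2^{-N})`. -/
lemma exists_amplitude_and_correction (A₀ ε δ : ℝ) (N : ℤ) (D y₀ : ℤ → ℝ)
    (hD : ∀ n ≤ N, |D n| ≤ ε) (hy₀ : ∀ n : ℤ, (2:ℝ) ^ (n:ℝ) * |y₀ n| ≤ δ)
    (hεδ : 2 * ε + 2 * δ ≤ 1) :
    ∃ (A : ℝ) (y : ℤ → ℝ), y N = 0 ∧ (∀ n, N < n → y n = y₀ n) ∧
      (∀ n ≤ N, Real.exp (-A₀ * (2:ℝ) ^ (n:ℝ) + D n) * (1 + (2:ℝ) ^ (n:ℝ) * y₀ n) =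
        Real.exp (-A * (2:ℝ) ^ (n:ℝ)) * (1 + (2:ℝ) ^ (n:ℝ) * y n)) ∧
      |A - A₀| ≤ (ε + 2 * δ) * (2:ℝ) ^ (-(N:ℝ)) ∧
      ∀ n : ℤ, (2:ℝ) ^ (n:ℝ) * |y n - y₀ n| ≤ 3 * (2 * ε + 2 * δ) := by
  have hε : 0 ≤ ε := (abs_nonneg _).trans (hD N le_rfl)
  have hδ : 0 ≤ δ := (by positivity : (0:ℝ) ≤ 2 ^ (N:ℝ) * |y₀ N|).trans (hy₀ N)
  have hsmall : ∀ n : ℤ, |(2:ℝ) ^ (n:ℝ) * y₀ n| ≤ 1 / 2 := fun n => by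
    rw [abs_mul, abs_of_pos (by positivity)]; linarith [hy₀ n]
  set u := (2:ℝ) ^ (N:ℝ) * y₀ N
  have hu : 0 < 1 + u := by linarith [(abs_le.1 (hsmall N)).1]
  have hlog : |Real.log (1 + u)| ≤ 2 * δ := by
    have := hy₀ N
    calc |Real.log (1 + u)| ≤ 2 * |u| := abs_log_one_add_le (hsmall N)
      _ ≤ 2 * δ := by rw [abs_mul, abs_of_pos (by positivity : (0:ℝ) < 2 ^ (N:ℝ))]; linarith
  set A := A₀ - (2:ℝ) ^ (-(N:ℝ)) * (Real.log (1 + u) + D N)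
  have hAA₀ : |A - A₀| ≤ (ε + 2 * δ) * (2:ℝ) ^ (-(N:ℝ)) := by
    rw [show A - A₀ = -((2:ℝ) ^ (-(N:ℝ)) * (Real.log (1 + u) + D N)) by ring, abs_neg,
      abs_mul, abs_of_pos (by positivity), mul_comm]
    gcongr
    linarith [abs_add_le (Real.log (1 + u)) (D N), hD N le_rfl]
  have hE : ∀ n ≤ N, |(A - A₀) * (2:ℝ) ^ (n:ℝ) + D n| ≤ 2 * ε + 2 * δ := fun n hn => by
    have hpow : (2:ℝ) ^ (-(N:ℝ)) * (2:ℝ) ^ (n:ℝ) ≤ 1 := by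
      rw [← Real.rpow_add two_pos]
      exact Real.rpow_le_one_of_one_le_of_nonpos one_le_two (by simp [hn])
    have : |(A - A₀) * (2:ℝ) ^ (n:ℝ)| ≤ ε + 2 * δ := by
      rw [abs_mul, abs_of_pos (by positivity : (0:ℝ) < 2 ^ (n:ℝ))]
      calc |A - A₀| * (2:ℝ) ^ (n:ℝ) ≤ (ε + 2 * δ) * (2:ℝ) ^ (-(N:ℝ)) * (2:ℝ) ^ (n:ℝ) := by
            gcongr
        _ ≤ ε + 2 * δ := by
            rw [mul_assoc]; exact mul_le_of_le_one_right (by linarith) hpow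
    linarith [abs_add_le ((A - A₀) * (2:ℝ) ^ (n:ℝ)) (D n), hD n hn]
  obtain ⟨y, hy, hfar, hyy₀⟩ := exists_correction_absorbing_exp_factor N _ y₀ hE hεδ hsmall
  refine ⟨A, y, ?_, hfar, fun n hn => ?_, hAA₀, hyy₀⟩
  · have h := hy N le_rfl
    have hEN : (A - A₀) * (2:ℝ) ^ (N:ℝ) + D N = -Real.log (1 + u) := by
      linear_combination (-(Real.log (1 + u) + D N)) * two_rpow_mul_two_rpow_neg (N:ℝ)
    rw [hEN, Real.exp_neg, Real.exp_log hu, inv_mul_cancel₀ hu.ne'] at h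
    have : (2:ℝ) ^ (N:ℝ) * y N = 0 := by linarith
    exact (mul_eq_zero.1 this).resolve_left (by positivity)
  · rw [hy n hn, ← mul_assoc, ← Real.exp_add]
    congr 2
    ring

lemma eventually_half_rpow_le {f : ℝ → ℝ} {a : ℝ}
    (hlim : Tendsto (fun ξ => f ξ / ξ ^ a) atTop (𝓝 1)) :
    ∀ᶠ ξ in atTop, ξ ^ a / 2 ≤ f ξ := by
  filter_upwards [hlim.eventually (eventually_ge_nhds (by norm_num : (1:ℝ) / 2 < 1)),
    eventually_gt_atTop 0] with ξ hξ hpos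
  rw [le_div_iff₀ (by positivity)] at hξ
  linarith

/-- The derivative `2^x log 2 · f'(2^x) / f(2^x)` is at most `2 c log 2` once `f(2^x) ≥ 2^{ax} / 2`. -/
lemma exists_lipschitz_log_comp_two_rpow {f : ℝ → ℝ} {a c : ℝ}
    (hdiff : ∀ ξ, 1 ≤ ξ → DifferentiableAt ℝ f ξ)
    (hlim : Tendsto (fun ξ => f ξ / ξ ^ a) atTop (𝓝 1))
    (hf' : ∀ ξ, 1 ≤ ξ → |deriv f ξ| ≤ c * ξ ^ (a - 1)) :
    ∃ L x₀ : ℝ, 0 ≤ L ∧ ∀ x y, x₀ ≤ x → x₀ ≤ y →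
      |Real.log (f (2 ^ x)) - Real.log (f (2 ^ y))| ≤ L * |x - y| := by
  have hc : 0 ≤ c := by simpa using (abs_nonneg _).trans (hf' 1 le_rfl)
  obtain ⟨x₀, hx₀⟩ := eventually_atTop.1 <|
    (tendsto_rpow_atTop_of_base_gt_one 2 one_lt_two).eventually
      ((eventually_ge_atTop 1).and (eventually_half_rpow_le hlim))
  set F' : ℝ → ℝ := fun z => deriv f (2 ^ z) * (2 ^ z * Real.log 2) / f (2 ^ z)
  have hderiv : ∀ z ∈ Ici x₀, HasDerivWithinAt (fun x => Real.log (f (2 ^ x))) (F' z) (Ici x₀) z :=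
    fun z hz => by
      obtain ⟨h1, hf⟩ := hx₀ z hz
      refine (((hdiff _ h1).hasDerivAt.comp z
        (Real.hasStrictDerivAt_const_rpow two_pos z).hasDerivAt).log ?_).hasDerivWithinAt
      exact (lt_of_lt_of_le (by positivity) hf).ne'
  have hbound : ∀ z ∈ Ici x₀, ‖F' z‖ ≤ 2 * c * Real.log 2 := fun z hz => by
    obtain ⟨h1, hf⟩ := hx₀ z hz
    set ξ : ℝ := 2 ^ z
    have hξ : 0 < ξ := by positivity
    have hfpos : 0 < f ξ := lt_of_lt_of_le (by positivity) hf
    have hlog2 : 0 < Real.log 2 := Real.log_pos one_lt_two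
    rw [Real.norm_eq_abs, abs_div, abs_mul, abs_mul, abs_of_pos hξ, abs_of_pos hlog2,
      abs_of_pos hfpos, div_le_iff₀ hfpos]
    calc |deriv f ξ| * (ξ * Real.log 2) ≤ c * ξ ^ (a - 1) * (ξ * Real.log 2) := by
          gcongr; exact hf' ξ h1
      _ = 2 * c * Real.log 2 * (ξ ^ a / 2) := by
          rw [Real.rpow_sub_one hξ.ne']; field_simp
      _ ≤ 2 * c * Real.log 2 * f ξ := by gcongr
  refine ⟨2 * c * Real.log 2, x₀, by positivity, fun x y hx hy => ?_⟩
  simpa only [Real.norm_eq_abs] using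
    (convex_Ici x₀).norm_image_sub_le_of_norm_hasDerivWithin_le hderiv hbound hy hx

lemma tendsto_div_rpow_of_isBigO_sub_rpow {f : ℝ → ℝ} {b b' : ℝ}
    (hf : (fun ξ => f ξ - ξ ^ b) =O[atTop] fun ξ => ξ ^ b') (hb : b' < b) :
    Tendsto (fun ξ => f ξ / ξ ^ b) atTop (𝓝 1) := by
  have hdecay : Tendsto (fun ξ : ℝ => ξ ^ b' * ξ ^ (-b)) atTop (𝓝 0) := by
    refine (tendsto_rpow_neg_atTop (by linarith : 0 < b - b')).congr' ?_
    filter_upwards [eventually_gt_atTop 0] with ξ hξ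
    rw [← Real.rpow_add hξ]; ring_nf
  have hsmall := (hf.mul (isBigO_refl (fun ξ : ℝ => ξ ^ (-b)) atTop)).trans_tendsto hdecay
  rw [← zero_add 1]
  refine (hsmall.add_const 1).congr' ?_
  filter_upwards [eventually_gt_atTop 0] with ξ hξ
  rw [Real.rpow_neg hξ.le]
  field_simp
  ring

lemma abs_comp_add_sub_comp_add_le {F : ℝ → ℝ} {L x₀ δ : ℝ} {N : ℤ} {p q : ℤ → ℝ}
    (hF : ∀ x y, x₀ ≤ x → x₀ ≤ y → |F x - F y| ≤ L * |x - y|) (hL : 0 ≤ L) (hN : x₀ ≤ N)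
    (hpq : ∀ i ≤ N, p i = q i) (hp : ∀ i, -1 ≤ p i) (hq : ∀ i, -1 ≤ q i)
    (hδ : ∀ i, |p i - q i| ≤ δ) (i : ℤ) :
    |F (i + p i) - F (i + q i)| ≤ L * δ := by
  rcases le_or_gt i N with hi | hi
  · rw [hpq i hi, sub_self, abs_zero]
    exact mul_nonneg hL ((abs_nonneg _).trans (hδ i))
  · have hi' : (N:ℝ) + 1 ≤ i := by exact_mod_cast hi
    calc |F (i + p i) - F (i + q i)| ≤ L * |(i + p i) - (i + q i)| :=
          hF _ _ (by linarith [hp i]) (by linarith [hq i])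
      _ ≤ L * δ := by rw [add_sub_add_left_eq_sub]; exact mul_le_mul_of_nonneg_left (hδ i) hL

lemma eventually_mul_two_rpow_neg_lt (c : ℝ) {a : ℝ} (ha : 0 < a) :
    ∀ᶠ N : ℕ in atTop, c * (2:ℝ) ^ (-(N:ℝ)) < a := by
  have h := (tendsto_pow_atTop_nhds_zero_of_lt_one (by norm_num : (0:ℝ) ≤ 1 / 2)
    (by norm_num)).const_mul c
  rw [mul_zero] at h
  filter_upwards [h.eventually (eventually_lt_nhds ha)] with N hN
  rwa [Real.rpow_neg two_pos.le, Real.rpow_natCast, ← inv_pow, ← one_div]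

namespace Kernels

variable (KD : Kernels)

lemma zeta_pos (p : ℤ → ℝ) (n : ℤ) : 0 < KD.zeta p n := by
  have := KD.hkpos _ (Real.rpow_pos_of_pos two_pos ((n:ℝ) + p n))
  have := KD.hγpos _ (Real.rpow_pos_of_pos two_pos ((n:ℝ) + 1 + p (n + 1)))
  have := Real.log_pos one_lt_two
  unfold zeta
  positivity

lemma log_zeta (p : ℤ → ℝ) (n : ℤ) :
    Real.log (KD.zeta p n) = Real.log (Real.log 2) - (n + p n) * Real.log 2 +
      Real.log (KD.k (2 ^ ((n:ℝ) + p n))) - Real.log (KD.γ (2 ^ (((n + 1 : ℤ) : ℝ) + p (n + 1)))) := by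
  have hk := (KD.hkpos _ (Real.rpow_pos_of_pos two_pos ((n:ℝ) + p n))).ne'
  have hγ := (KD.hγpos _ (Real.rpow_pos_of_pos two_pos ((n:ℝ) + 1 + p (n + 1)))).ne'
  have hlog2 := (Real.log_pos one_lt_two).ne'
  have h2 := (Real.rpow_pos_of_pos two_pos (-((n:ℝ) + p n))).ne'
  rw [zeta, Real.log_div (by positivity) hγ, Real.log_mul (by positivity) hk,
    Real.log_mul hlog2 h2, Real.log_rpow two_pos, Int.cast_add, Int.cast_one]
  ring

lemma log_thetaSeq (p : ℤ → ℝ) (n : ℤ) :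
    Real.log (KD.thetaSeq p n) =
      Real.log 2 + Real.log (KD.zeta p (n + 1)) - Real.log (KD.zeta p n) := by
  rw [thetaSeq, mul_div_assoc, Real.log_mul two_ne_zero
    (div_pos (KD.zeta_pos p (n + 1)) (KD.zeta_pos p n)).ne',
    Real.log_div (KD.zeta_pos p (n + 1)).ne' (KD.zeta_pos p n).ne']
  ring

def mbarExponent (p : ℤ → ℝ) (n : ℤ) : ℝ :=
  (2:ℝ) ^ (n:ℝ) *
    ∑' j : ℕ, (2:ℝ) ^ (-((n:ℝ) + 1 + j)) * Real.log (KD.thetaSeq p (n + j)) +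
  Real.log (KD.zeta p n)

lemma mbar_eq (A : ℝ) (p : ℤ → ℝ) (n : ℤ) :
    KD.mbar A p n = 2 * Real.exp (-(A * (2:ℝ) ^ (n:ℝ) + KD.mbarExponent p n)) := by
  rw [mbar, mubar, mbarExponent, neg_add, neg_add, Real.exp_add, Real.exp_add,
    Real.exp_neg (Real.log _), Real.exp_log (KD.zeta_pos p n), neg_mul, neg_mul]
  ring

lemma mbar_mul_eq_of_exp_mul_eq {A₀ A a b : ℝ} {p q : ℤ → ℝ} {n : ℤ}
    (h : Real.exp (-A₀ * (2:ℝ) ^ (n:ℝ) + (KD.mbarExponent q n - KD.mbarExponent p n)) * a =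
      Real.exp (-A * (2:ℝ) ^ (n:ℝ)) * b) :
    KD.mbar A₀ p n * a = KD.mbar A q n * b := by
  have hsplit : ∀ B Φ : ℝ, Real.exp (-(B * 2 ^ (n:ℝ) + Φ)) = Real.exp (-KD.mbarExponent q n) *
      Real.exp (-B * 2 ^ (n:ℝ) + (KD.mbarExponent q n - Φ)) := fun B Φ => by
    rw [← Real.exp_add]; congr 1; ring
  rw [KD.mbar_eq, KD.mbar_eq, hsplit A₀, hsplit A, sub_self, add_zero]
  linear_combination 2 * Real.exp (-KD.mbarExponent q n) * h

lemma abs_mbarExponent_sub_le {p q : ℤ → ℝ} {ε : ℝ}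
    (hζ : ∀ n, |Real.log (KD.zeta p n) - Real.log (KD.zeta q n)| ≤ ε) (n : ℤ) :
    |KD.mbarExponent p n - KD.mbarExponent q n| ≤ 3 * ε := by
  have hθ : ∀ m, |Real.log (KD.thetaSeq p m) - Real.log (KD.thetaSeq q m)| ≤ 2 * ε := fun m => by
    rw [log_thetaSeq, log_thetaSeq,
      show ∀ a b c d e : ℝ, a + b - c - (a + d - e) = (b - d) - (c - e) by intros; ring]
    linarith [abs_sub (Real.log (KD.zeta p (m + 1)) - Real.log (KD.zeta q (m + 1)))
      (Real.log (KD.zeta p m) - Real.log (KD.zeta q m)), hζ m, hζ (m + 1)]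
  have htail := abs_two_rpow_mul_tsum_sub_le (n:ℝ) fun j => hθ (n + j)
  rw [mbarExponent, mbarExponent,
    show ∀ a b c d e : ℝ, a * b + c - (a * d + e) = a * (b - d) + (c - e) by intros; ring]
  linarith [abs_add_le ((2:ℝ) ^ (n:ℝ) *
      (∑' j : ℕ, (2:ℝ) ^ (-((n:ℝ) + 1 + j)) * Real.log (KD.thetaSeq p (n + j)) -
        ∑' j : ℕ, (2:ℝ) ^ (-((n:ℝ) + 1 + j)) * Real.log (KD.thetaSeq q (n + j))))
    (Real.log (KD.zeta p n) - Real.log (KD.zeta q n)), hζ n]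


lemma exists_lipschitz_log_k_log_γ :
    ∃ L x₀ : ℝ, 0 ≤ L ∧
      (∀ x y, x₀ ≤ x → x₀ ≤ y →
        |Real.log (KD.k (2 ^ x)) - Real.log (KD.k (2 ^ y))| ≤ L * |x - y|) ∧
      ∀ x y, x₀ ≤ x → x₀ ≤ y →
        |Real.log (KD.γ (2 ^ x)) - Real.log (KD.γ (2 ^ y))| ≤ L * |x - y| := by
  have hdiff : ∀ {f : ℝ → ℝ}, ContDiffOn ℝ 2 f (Ioi 0) → ∀ ξ, 1 ≤ ξ → DifferentiableAt ℝ f ξ :=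
    fun hf ξ hξ => (hf.differentiableOn (by norm_num)).differentiableAt
      (Ioi_mem_nhds (by linarith))
  obtain ⟨Lk, xk, hLk, hk⟩ := exists_lipschitz_log_comp_two_rpow (hdiff KD.hkC2) KD.hkInfty
    (c := KD.k₁) fun ξ hξ => by simpa using KD.hk'ge ξ hξ
  obtain ⟨Lγ, xγ, -, hγ⟩ := exists_lipschitz_log_comp_two_rpow (hdiff KD.hγC2)
    (tendsto_div_rpow_of_isBigO_sub_rpow KD.hγInfty KD.hβt) KD.hγ'ge
  refine ⟨max Lk Lγ, max xk xγ, le_max_of_le_left hLk, fun x y hx hy => ?_, fun x y hx hy => ?_⟩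
  · exact (hk x y (le_of_max_le_left hx) (le_of_max_le_left hy)).trans
      (mul_le_mul_of_nonneg_right (le_max_left _ _) (abs_nonneg _))
  · exact (hγ x y (le_of_max_le_right hx) (le_of_max_le_right hy)).trans
      (mul_le_mul_of_nonneg_right (le_max_right _ _) (abs_nonneg _))

lemma abs_log_zeta_sub_le {L x₀ δ : ℝ} {N : ℤ} {p q : ℤ → ℝ} (hL : 0 ≤ L)
    (hk : ∀ x y, x₀ ≤ x → x₀ ≤ y →
      |Real.log (KD.k (2 ^ x)) - Real.log (KD.k (2 ^ y))| ≤ L * |x - y|)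
    (hγ : ∀ x y, x₀ ≤ x → x₀ ≤ y →
      |Real.log (KD.γ (2 ^ x)) - Real.log (KD.γ (2 ^ y))| ≤ L * |x - y|)
    (hN : x₀ ≤ N) (hpq : ∀ i ≤ N, p i = q i) (hp : ∀ i, -1 ≤ p i) (hq : ∀ i, -1 ≤ q i)
    (hδ : ∀ i, |p i - q i| ≤ δ) (n : ℤ) :
    |Real.log (KD.zeta p n) - Real.log (KD.zeta q n)| ≤ (Real.log 2 + 2 * L) * δ := by
  have hkn := abs_comp_add_sub_comp_add_le hk hL hN hpq hp hq hδ n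
  have hγn := abs_comp_add_sub_comp_add_le hγ hL hN hpq hp hq hδ (n + 1)
  have hshift : |(n + p n) * Real.log 2 - (n + q n) * Real.log 2| ≤ Real.log 2 * δ := by
    rw [← sub_mul, add_sub_add_left_eq_sub, abs_mul, abs_of_pos (Real.log_pos one_lt_two),
      mul_comm]
    exact mul_le_mul_of_nonneg_left (hδ n) (Real.log_pos one_lt_two).le
  rw [log_zeta, log_zeta]
  rw [abs_le] at hkn hγn hshift ⊢
  constructor <;> linarith [hkn.1, hkn.2, hγn.1, hγn.2, hshift.1, hshift.2]

lemma exists_abs_mbarExponent_truncate_sub_le :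
    ∃ C x₀ : ℝ, 0 < C ∧ ∀ (N : ℤ) (δ : ℝ) (p : ℤ → ℝ), x₀ ≤ N → δ ≤ 1 → (∀ i, |p i| ≤ δ) →
      ∀ n, |KD.mbarExponent (fun j => if j ≤ N then p j else 0) n - KD.mbarExponent p n| ≤
        C * δ := by
  obtain ⟨L, x₀, hL, hk, hγ⟩ := KD.exists_lipschitz_log_k_log_γ
  refine ⟨3 * (Real.log 2 + 2 * L), x₀, by positivity, fun N δ p hN hδ1 hp n => ?_⟩
  have hδ : 0 ≤ δ := (abs_nonneg _).trans (hp 0)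
  have htrunc : ∀ i, |(if i ≤ N then p i else 0)| ≤ δ := fun i => by
    split_ifs <;> simp [hp, hδ]
  have hdiff : ∀ i, |(if i ≤ N then p i else 0) - p i| ≤ δ := fun i => by
    split_ifs <;> simp [hp, hδ]
  rw [mul_assoc]
  exact KD.abs_mbarExponent_sub_le (KD.abs_log_zeta_sub_le hL hk hγ hN (fun i hi => if_pos hi)
    (fun i => by linarith [(abs_le.1 (htrunc i)).1]) (fun i => by linarith [(abs_le.1 (hp i)).1])
    hdiff) n

end Kernels

/-- re-representation of well-prepared initial data with respect to
the truncated shift sequence (Lemma 5.1). -/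
theorem truncated_initial_representation (KD : Kernels) :
    ∃ δbar : ℝ, 0 < δbar ∧ δbar ≤ 1 ∧
    ∃ c₀ : ℝ, 0 < c₀ ∧
      ∀ δ₀ : ℝ, 0 < δ₀ → δ₀ < δbar →
      ∀ A0 : ℝ, 0 < A0 →
      ∀ y0 p0 : ℤ → ℝ, Ynorm 1 y0 ≤ ENNReal.ofReal δ₀ → (∀ n, |p0 n| ≤ δ₀) →
        ∃ N₀ : ℕ, ∀ N : ℕ, N₀ ≤ N →
          ∃ (AN : ℝ) (yN : ℤ → ℝ), 0 < AN ∧ yN (N:ℤ) = 0 ∧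
            (∀ n : ℤ, (N:ℤ) < n → yN n = y0 n) ∧
            (∀ n : ℤ, n ≤ (N:ℤ) →
              KD.mbar A0 p0 n * (1 + (2:ℝ) ^ (n:ℝ) * y0 n) =
                KD.mbar AN (fun j => if j ≤ (N:ℤ) then p0 j else 0) n *
                  (1 + (2:ℝ) ^ (n:ℝ) * yN n)) ∧
            |AN - A0| ≤ c₀ * (2:ℝ) ^ (-(N:ℝ)) * δ₀ ∧
            Ynorm 1 (fun n => yN n - y0 n) ≤ ENNReal.ofReal (c₀ * δ₀) := by
  obtain ⟨C, x₀, hC, htrunc⟩ := KD.exists_abs_mbarExponent_truncate_sub_le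
  refine ⟨1 / (2 * C + 2), by positivity, by rw [div_le_one (by positivity)]; linarith,
    12 * C + 12, by positivity, fun δ hδ hδbar A0 hA0 y0 p0 hy0 hp0 => ?_⟩
  rw [lt_div_iff₀ (by positivity)] at hδbar
  have hδ1 : δ ≤ 1 := by nlinarith
  obtain ⟨N₀, hN₀⟩ := eventually_atTop.1 <| (tendsto_natCast_atTop_atTop.eventually_ge_atTop x₀).and
    (eventually_mul_two_rpow_neg_lt (C + 2) hA0)
  refine ⟨N₀, fun N hN => ?_⟩
  obtain ⟨hxN, hsmallN⟩ := hN₀ N hN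
  obtain ⟨AN, yN, hyN, hfar, hrep, hAN, hyN'⟩ := exists_amplitude_and_correction A0 (C * δ) δ N
    (fun n => KD.mbarExponent (fun j => if j ≤ (N:ℤ) then p0 j else 0) n - KD.mbarExponent p0 n)
    y0 (fun n _ => htrunc N δ p0 (by exact_mod_cast hxN) hδ1 hp0 n)
    (two_rpow_mul_abs_le_of_Ynorm_one_le hδ.le hy0) (by linarith)
  rw [Int.cast_natCast] at hAN
  have h2N : 0 < (2:ℝ) ^ (-(N:ℝ)) := by positivity
  refine ⟨AN, yN, ?_, hyN, hfar, fun n hn => KD.mbar_mul_eq_of_exp_mul_eq (hrep n hn),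
    hAN.trans ?_, ?_⟩
  · nlinarith [(abs_le.1 hAN).1, mul_le_mul_of_nonneg_left hδ1 (mul_pos (by positivity) h2N).le]
  · nlinarith [mul_pos hδ h2N, mul_pos (mul_pos hC hδ) h2N]
  · refine (Ynorm_one_le_of_two_rpow_mul_abs_le (by positivity) hyN').trans_eq ?_
    congr 1; ring
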